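/- For all positive integers p, (p+1) · ∑_{j=0}^{2p} (-1)^j C(2p, j) C(2p+2, 2p-j) = 2 · (-1)^p C(2p-1, p). -/
import Mathlib
open Polynomial Finset

lemma one_sub_X_sq_pow (n : ℕ) :
    ((1 - X^2 : ℤ[X])) ^ n = ∑ i ∈ range (n+1), C ((-1)^i * (n.choose i : ℤ)) * X^(2*i) := by
  have he : (1 - X^2 : ℤ[X]) = -(X^2) + 1 := by ring
  rw [he, add_pow]
  apply Finset.sum_congr rfl
  intro i _
  rw [neg_pow, one_pow, mul_one]
  rw [pow_mul]
  simp only [map_mul, map_pow, map_neg, map_one, map_natCast]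
  ring

lemma coeff_even (n m : ℕ) (hm : m ≤ n) :
    ((1 - X^2 : ℤ[X]) ^ n).coeff (2*m) = (-1)^m * (n.choose m : ℤ) := by
  rw [one_sub_X_sq_pow, finset_sum_coeff]
  simp only [coeff_C_mul, coeff_X_pow]
  rw [Finset.sum_eq_single m]
  · simp
  · intro b _ hb
    rw [if_neg (by omega), mul_zero]
  · intro h; exact absurd (Finset.mem_range.2 (by omega)) h

lemma coeff_odd (n m : ℕ) :
    ((1 - X^2 : ℤ[X]) ^ n).coeff (2*m+1) = 0 := by
  rw [one_sub_X_sq_pow, finset_sum_coeff]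
  simp only [coeff_C_mul, coeff_X_pow]
  apply Finset.sum_eq_zero
  intro b _
  rw [if_neg (by omega), mul_zero]

lemma coeff_one_sub_X_pow (n k : ℕ) :
    ((1 - X : ℤ[X]) ^ n).coeff k = (-1)^k * (n.choose k : ℤ) := by
  have he : (1 - X : ℤ[X]) = -X + 1 := by ring
  have hexp : ((1 - X : ℤ[X])) ^ n = ∑ i ∈ range (n+1), C ((-1)^i * (n.choose i : ℤ)) * X^i := by
    rw [he, add_pow]
    apply Finset.sum_congr rfl
    intro i _
    rw [neg_pow, one_pow, mul_one]
    simp only [map_mul, map_pow, map_neg, map_one, map_natCast]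
    ring
  rw [hexp, finset_sum_coeff]
  simp only [coeff_C_mul, coeff_X_pow]
  rw [Finset.sum_eq_single k]
  · simp
  · intro b _ hb
    rw [if_neg (by omega), mul_zero]
  · intro h
    have : n < k := by by_contra hc; exact h (Finset.mem_range.2 (by omega))
    rw [Nat.choose_eq_zero_of_lt this]
    simp

theorem stmt_17 (p : ℕ) (hp : 0 < p) :
    ((p : ℤ) + 1) *
        (∑ j ∈ Finset.range (2 * p + 1),
          (-1 : ℤ) ^ j * ((2 * p).choose j) * ((2 * p + 2).choose (2 * p - j))) =
      2 * (-1) ^ p * ((2 * p - 1).choose p) := by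
  obtain ⟨m, rfl⟩ : ∃ m, p = m + 1 := ⟨p - 1, by omega⟩
  -- Step 1: the sum is a coefficient of (1-X)^(2p) * (1+X)^(2p+2)
  set n := 2 * (m + 1) with hn
  have h1 : (∑ j ∈ Finset.range (n + 1),
        (-1 : ℤ) ^ j * (n.choose j) * ((n + 2).choose (n - j))) =
      (((1 - X : ℤ[X]) ^ n * (1 + X) ^ (n + 2)).coeff n) := by
    rw [coeff_mul, Finset.Nat.sum_antidiagonal_eq_sum_range_succ_mk]
    apply Finset.sum_congr rfl
    intro j _
    rw [coeff_one_sub_X_pow, coeff_one_add_X_pow, mul_assoc]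
  -- Step 2: rewrite the polynomial
  have h2 : ((1 - X : ℤ[X]) ^ n * (1 + X) ^ (n + 2)) = (1 + X)^2 * (1 - X^2)^n := by
    rw [pow_add, show ((1 - X : ℤ[X])^n * ((1+X)^n * (1+X)^2)) =
      (1+X)^2 * ((1-X)*(1+X))^n by rw [mul_pow]; ring]
    congr 2
    ring
  -- Step 3: compute the coefficient
  have h3 : ((1 + X : ℤ[X])^2 * (1 - X^2)^n).coeff n =
      (-1)^(m+1) * ((n.choose (m+1) : ℤ)) + (-1)^m * (n.choose m : ℤ) := by
    have hs : ((1 + X : ℤ[X])^2) = 1 + 2*X + X^2 := by ring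
    rw [hs, add_mul, add_mul, one_mul, coeff_add, coeff_add]
    have e1 : ((1 - X^2 : ℤ[X])^n).coeff n = (-1)^(m+1) * ((n.choose (m+1) : ℤ)) := by
      rw [show n = 2*(m+1) from rfl, coeff_even _ _ (by omega)]
    have e2 : ((2*X : ℤ[X]) * (1 - X^2)^n).coeff n = 0 := by
      rw [mul_assoc]
      have h2c : (2 : ℤ[X]) = C 2 := by norm_num
      rw [h2c, coeff_C_mul, show n = 2*m+1+1 by omega, coeff_X_mul, coeff_odd, mul_zero]
    have e3 : ((X^2 : ℤ[X]) * (1 - X^2)^n).coeff n = (-1)^m * (n.choose m : ℤ) := by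
      rw [show n = 2*m + 2 by omega, coeff_X_pow_mul, coeff_even _ _ (by omega)]
    rw [e1, e2, e3]; ring
  rw [h1, h2, h3]
  -- Step 4: final arithmetic
  have fA : ((2*m+2).choose (m+1)) * (m+1) = ((2*m+2).choose m) * (m+2) := by
    have := Nat.choose_succ_right_eq (2*m+2) m
    rw [this]; congr 1; omega
  have fB : ((2*m+2).choose (m+1)) = 2 * ((2*m+1).choose (m+1)) := by
    have key : (2*m+2).choose (m+1) = (2*m+1).choose m + (2*m+1).choose (m+1) :=
      Nat.choose_succ_succ (2*m+1) m
    have hsym : (2*m+1).choose m = (2*m+1).choose (m+1) := by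
      rw [← Nat.choose_symm (by omega : m + 1 ≤ 2*m+1)]
      congr 1; omega
    omega
  have hn' : n = 2*m+2 := by omega
  have hr : 2 * (m+1) - 1 = 2*m+1 := by omega
  rw [hn', show 2*m+2-1 = 2*m+1 from rfl]
  have fA' : ((2*m+2).choose (m+1) : ℤ) * (m+1) = ((2*m+2).choose m : ℤ) * (m+2) := by
    exact_mod_cast congrArg (Nat.cast : ℕ → ℤ) fA
  have fB' : ((2*m+2).choose (m+1) : ℤ) = 2 * ((2*m+1).choose (m+1) : ℤ) := by
    exact_mod_cast congrArg (Nat.cast : ℕ → ℤ) fB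
  push_cast
  rw [pow_succ]
  push_cast at fA' fB'
  linear_combination (-(-1:ℤ)^m) * fA' + (-(-1:ℤ)^m) * fB'
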